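/- arXiv:1510.00269 — 2 statements merged into one kernel-verified Lean document; each statement's English description precedes it below -/
import Mathlib

section
/- The generating function f(x) = Σ_{n≥0} |Av_n(312)| x^n satisfies f(x) = (1 − √(1−4x))/(2x), i.e., x·f(x)^2 − f(x) + 1 = 0. -/
/-- `π` avoids the pattern 312. -/
def Avoids312 {n : ℕ} (π : Equiv.Perm (Fin n)) : Prop :=
  ∀ i j k : Fin n, i < j → j < k → ¬ (π j < π k ∧ π k < π i)

/-- The generating function of `Av(312)`. -/
noncomputable def f312 : PowerSeries ℚ :=
  PowerSeries.mk fun n => (Nat.card {π : Equiv.Perm (Fin n) // Avoids312 π} : ℚ)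

/-!
Let `π` avoid 312 and let `m` be the position of its minimum `0`. Every entry left of `m` is
smaller than every entry right of `m`, since otherwise these two entries and the minimum form a
312. Hence `π` consists of a 312-avoiding permutation of the values `1, …, m` in the positions
`0, …, m - 1`, the minimum, and a 312-avoiding permutation of the values `m + 1, …, n` in the
positions `m + 1, …, n`; conversely every such gluing avoids 312. So `|Av_n(312)|` satisfies the
Catalan recurrence, and the quadratic equation is that of the Catalan generating function.
-/

open Equiv Finset

def offsetEmb {m N : ℕ} (c : ℕ) (h : c + m ≤ N) : Fin m ↪o Fin N :=
  OrderEmbedding.ofStrictMono (fun j => ⟨c + j, by omega⟩) fun _ _ hab =>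
    Fin.mk_lt_mk.2 (Nat.add_lt_add_left hab c)

@[simp]
lemma offsetEmb_val {m N c : ℕ} (h : c + m ≤ N) (j : Fin m) : (offsetEmb c h j : ℕ) = c + j := rfl

lemma exists_offsetEmb_eq_iff {m N c : ℕ} (h : c + m ≤ N) (i : Fin N) :
    (∃ j, offsetEmb c h j = i) ↔ c ≤ i ∧ (i : ℕ) < c + m := by
  constructor
  · rintro ⟨j, rfl⟩
    simp only [offsetEmb_val]
    omega
  · rintro ⟨hc, hm⟩
    exact ⟨⟨i - c, by omega⟩, Fin.ext (by simp only [offsetEmb_val]; omega)⟩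

section InducedPerm

variable {α β : Type*} [Finite α] (π : Perm β) (e g : α ↪ β) (h : ∀ a, π (e a) ∈ Set.range g)

noncomputable def inducedPerm : Perm α :=
  Equiv.ofBijective (fun a => (Equiv.ofInjective g g.injective).symm ⟨π (e a), h a⟩)
    (Finite.injective_iff_bijective.mp fun _ _ hab =>
      e.injective <| π.injective <| congrArg Subtype.val
        ((Equiv.ofInjective g g.injective).symm.injective hab))

lemma apply_inducedPerm (a : α) : g (inducedPerm π e g h a) = π (e a) :=
  Equiv.apply_ofInjective_symm g.injective _

lemma inducedPerm_eq_iff (σ : Perm α) : inducedPerm π e g h = σ ↔ ∀ a, π (e a) = g (σ a) :=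
  ⟨by rintro rfl a; exact (apply_inducedPerm π e g h a).symm,
    fun hσ => Equiv.ext fun a => g.injective (by rw [apply_inducedPerm, hσ])⟩

end InducedPerm

section Semiconj

variable {m N : ℕ} {π : Perm (Fin N)} {σ : Perm (Fin m)} (e g : Fin m ↪o Fin N)

lemma Avoids312.not_occurs_of_semiconj (h : ∀ a, π (e a) = g (σ a)) (hσ : Avoids312 σ)
    {a b c : Fin m} (hab : e a < e b) (hbc : e b < e c) :
    ¬ (π (e b) < π (e c) ∧ π (e c) < π (e a)) := by
  simpa only [h, g.lt_iff_lt] using hσ a b c (e.lt_iff_lt.1 hab) (e.lt_iff_lt.1 hbc)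

lemma Avoids312.of_semiconj (h : ∀ a, π (e a) = g (σ a)) (hπ : Avoids312 π) : Avoids312 σ :=
  fun i j k hij hjk => by
    simpa only [h, g.lt_iff_lt] using hπ (e i) (e j) (e k) (e.lt_iff_lt.2 hij) (e.lt_iff_lt.2 hjk)

end Semiconj

lemma card_le_of_forall_apply_lt {N : ℕ} (π : Perm (Fin N)) (s : Finset (Fin N)) (v : Fin N)
    (h : ∀ x ∈ s, π x < v) : #s ≤ v :=
  calc #s ≤ #(Iio v) := card_le_card_of_injOn π (fun x hx => by simpa using h x hx) π.injective.injOn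
    _ = v := Fin.card_Iio v

lemma card_le_of_forall_lt_apply {N : ℕ} (π : Perm (Fin N)) (s : Finset (Fin N)) (v : Fin N)
    (h : ∀ x ∈ s, v < π x) : #s ≤ N - 1 - v :=
  calc #s ≤ #(Ioi v) := card_le_card_of_injOn π (fun x hx => by simpa using h x hx) π.injective.injOn
    _ = N - 1 - v := Fin.card_Ioi v

section Decomposition

variable {n : ℕ} (m : Fin (n + 1))

abbrev leftPos : Fin m ↪o Fin (n + 1) := offsetEmb 0 (by omega)

abbrev leftVal : Fin m ↪o Fin (n + 1) := offsetEmb 1 (by omega)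

abbrev rightEmb : Fin (n - m) ↪o Fin (n + 1) := offsetEmb (m + 1) (by omega)

lemma exists_leftPos_or_eq_or_exists_rightEmb (i : Fin (n + 1)) :
    (∃ a, leftPos m a = i) ∨ i = m ∨ ∃ b, rightEmb m b = i := by
  rw [exists_offsetEmb_eq_iff, exists_offsetEmb_eq_iff, Fin.ext_iff]
  omega

lemma exists_leftVal_or_eq_zero_or_exists_rightEmb (v : Fin (n + 1)) :
    (∃ a, leftVal m a = v) ∨ v = 0 ∨ ∃ b, rightEmb m b = v := by
  rw [exists_offsetEmb_eq_iff, exists_offsetEmb_eq_iff, Fin.ext_iff, Fin.val_zero]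
  omega

variable {m} {π : Perm (Fin (n + 1))}

lemma Avoids312.apply_lt_apply_of_lt_of_gt (hπ : Avoids312 π) (hm : π m = 0) {i k : Fin (n + 1)}
    (hi : i < m) (hk : m < k) : π i < π k := by
  have hk0 : π k ≠ 0 := hm ▸ π.injective.ne hk.ne'
  have hik : π i ≠ π k := π.injective.ne (hi.trans hk).ne
  have := hπ i m k hi hk
  rw [hm] at this
  exact lt_of_le_of_ne (not_lt.1 fun h => this ⟨Fin.pos_of_ne_zero hk0, h⟩) hik

lemma Avoids312.apply_le_of_lt (hπ : Avoids312 π) (hm : π m = 0) {i : Fin (n + 1)} (hi : i < m) :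
    (π i : ℕ) ≤ m := by
  have := card_le_of_forall_lt_apply π (Ioi m) (π i) fun k hk =>
    hπ.apply_lt_apply_of_lt_of_gt hm hi (mem_Ioi.1 hk)
  rw [Fin.card_Ioi] at this
  omega

lemma Avoids312.lt_apply_of_gt (hπ : Avoids312 π) (hm : π m = 0) {k : Fin (n + 1)} (hk : m < k) :
    (m : ℕ) < π k := by
  have := card_le_of_forall_apply_lt π (Iic m) (π k) fun i hi =>
    (mem_Iic.1 hi).lt_or_eq.elim (hπ.apply_lt_apply_of_lt_of_gt hm · hk)
      fun h => h ▸ hm ▸ Fin.pos_of_ne_zero (hm ▸ π.injective.ne hk.ne')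
  rw [Fin.card_Iic] at this
  omega

lemma Avoids312.apply_leftPos_mem_range (hπ : Avoids312 π) (hm : π m = 0) (a : Fin m) :
    π (leftPos m a) ∈ Set.range (leftVal m) := by
  have hlt : leftPos m a < m := Fin.lt_def.2 (by simp)
  have hpos : π (leftPos m a) ≠ 0 := hm ▸ π.injective.ne hlt.ne
  have := hπ.apply_le_of_lt hm hlt
  refine (exists_offsetEmb_eq_iff _ _).2 ⟨?_, by omega⟩
  exact Nat.one_le_iff_ne_zero.2 (Fin.val_ne_iff.2 hpos)

lemma Avoids312.apply_rightEmb_mem_range (hπ : Avoids312 π) (hm : π m = 0) (b : Fin (n - m)) :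
    π (rightEmb m b) ∈ Set.range (rightEmb m) := by
  have := hπ.lt_apply_of_gt hm (Fin.lt_def.2 (by simp only [offsetEmb_val]; omega) : m < rightEmb m b)
  exact (exists_offsetEmb_eq_iff _ _).2 ⟨by omega, by omega⟩

noncomputable def Avoids312.leftBlock (hπ : Avoids312 π) (hm : π m = 0) : Perm (Fin m) :=
  inducedPerm π (leftPos m).toEmbedding (leftVal m).toEmbedding (hπ.apply_leftPos_mem_range hm)

noncomputable def Avoids312.rightBlock (hπ : Avoids312 π) (hm : π m = 0) : Perm (Fin (n - m)) :=
  inducedPerm π (rightEmb m).toEmbedding (rightEmb m).toEmbedding (hπ.apply_rightEmb_mem_range hm)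

end Decomposition

section Glue

variable {n : ℕ} (m : Fin (n + 1)) (σ : Perm (Fin m)) (τ : Perm (Fin (n - m)))

def glueFun (i : Fin (n + 1)) : Fin (n + 1) :=
  if h : (i : ℕ) < m then leftVal m (σ ⟨i, h⟩)
  else if h' : (i : ℕ) = m then 0
  else rightEmb m (τ ⟨i - m - 1, by have := i.isLt; omega⟩)

lemma glueFun_leftPos (a : Fin m) : glueFun m σ τ (leftPos m a) = leftVal m (σ a) := by
  simp [glueFun]

lemma glueFun_self : glueFun m σ τ m = 0 := by
  simp [glueFun]

lemma glueFun_rightEmb (b : Fin (n - m)) : glueFun m σ τ (rightEmb m b) = rightEmb m (τ b) := by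
  have h1 : ¬ ((rightEmb m b : ℕ) < m) := by simp only [offsetEmb_val]; omega
  have h2 : ¬ ((rightEmb m b : ℕ) = m) := by simp only [offsetEmb_val]; omega
  simp only [glueFun, dif_neg h1, dif_neg h2]
  congr 2
  ext
  simp only [offsetEmb_val]
  omega

lemma glueFun_surjective : Function.Surjective (glueFun m σ τ) := by
  intro v
  rcases exists_leftVal_or_eq_zero_or_exists_rightEmb m v with ⟨a, rfl⟩ | rfl | ⟨b, rfl⟩
  · exact ⟨leftPos m (σ.symm a), by rw [glueFun_leftPos, apply_symm_apply]⟩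
  · exact ⟨m, glueFun_self m σ τ⟩
  · exact ⟨rightEmb m (τ.symm b), by rw [glueFun_rightEmb, apply_symm_apply]⟩

noncomputable def glue : Perm (Fin (n + 1)) :=
  Equiv.ofBijective (glueFun m σ τ) (Finite.surjective_iff_bijective.mp (glueFun_surjective m σ τ))

lemma glue_leftPos (a : Fin m) : glue m σ τ (leftPos m a) = leftVal m (σ a) :=
  glueFun_leftPos m σ τ a

lemma glue_self : glue m σ τ m = 0 :=
  glueFun_self m σ τ

lemma glue_rightEmb (b : Fin (n - m)) : glue m σ τ (rightEmb m b) = rightEmb m (τ b) :=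
  glueFun_rightEmb m σ τ b

lemma avoids312_glue (hσ : Avoids312 σ) (hτ : Avoids312 τ) : Avoids312 (glue m σ τ) := by
  intro i j k hij hjk hpat
  rcases exists_leftPos_or_eq_or_exists_rightEmb m i with ⟨a, rfl⟩ | hi | ⟨a, rfl⟩
  · rcases exists_leftPos_or_eq_or_exists_rightEmb m k with ⟨c, rfl⟩ | rfl | ⟨c, rfl⟩
    · obtain ⟨b, rfl⟩ : ∃ b, leftPos m b = j := by
        rw [exists_offsetEmb_eq_iff]
        have := Fin.lt_def.1 hjk
        simp only [offsetEmb_val] at this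
        omega
      exact hσ.not_occurs_of_semiconj _ _ (glue_leftPos m σ τ) hij hjk hpat
    · rw [glue_self] at hpat
      exact Fin.not_lt_zero _ hpat.1
    · have := Fin.lt_def.1 hpat.2
      simp only [glue_leftPos, glue_rightEmb, offsetEmb_val] at this
      omega
  · rw [hi, glue_self] at hpat
    exact Fin.not_lt_zero _ hpat.2
  · have hj := Fin.lt_def.1 hij
    have hk := Fin.lt_def.1 (hij.trans hjk)
    simp only [offsetEmb_val] at hj hk
    obtain ⟨b, rfl⟩ : ∃ b, rightEmb m b = j := (exists_offsetEmb_eq_iff _ _).2 ⟨by omega, by omega⟩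
    obtain ⟨c, rfl⟩ : ∃ c, rightEmb m c = k := (exists_offsetEmb_eq_iff _ _).2 ⟨by omega, by omega⟩
    exact hτ.not_occurs_of_semiconj _ _ (glue_rightEmb m σ τ) hij hjk hpat

end Glue

lemma eq_glue_of {n : ℕ} {m : Fin (n + 1)} {π : Perm (Fin (n + 1))} {σ : Perm (Fin m)}
    {τ : Perm (Fin (n - m))} (hm : π m = 0) (hσ : ∀ a, π (leftPos m a) = leftVal m (σ a))
    (hτ : ∀ b, π (rightEmb m b) = rightEmb m (τ b)) : π = glue m σ τ := by
  ext1 i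
  rcases exists_leftPos_or_eq_or_exists_rightEmb m i with ⟨a, rfl⟩ | rfl | ⟨b, rfl⟩
  · rw [hσ, glue_leftPos]
  · rw [hm, glue_self]
  · rw [hτ, glue_rightEmb]

abbrev Av312 (n : ℕ) : Type := {π : Perm (Fin n) // Avoids312 π}

noncomputable def av312FiberEquiv {n : ℕ} (m : Fin (n + 1)) :
    {π : Av312 (n + 1) // π.1 m = 0} ≃ Av312 m × Av312 (n - m) where
  toFun π :=
    (⟨π.1.2.leftBlock π.2, π.1.2.of_semiconj _ _ fun a => (apply_inducedPerm ..).symm⟩,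
      ⟨π.1.2.rightBlock π.2, π.1.2.of_semiconj _ _ fun b => (apply_inducedPerm ..).symm⟩)
  invFun p := ⟨⟨glue m p.1 p.2, avoids312_glue m _ _ p.1.2 p.2.2⟩, glue_self m _ _⟩
  left_inv π := by
    ext1; ext1
    exact (eq_glue_of π.2 (fun a => (apply_inducedPerm ..).symm)
      fun b => (apply_inducedPerm ..).symm).symm
  right_inv p := by
    ext1 <;> ext1
    · exact (inducedPerm_eq_iff ..).2 (glue_leftPos m _ _)
    · exact (inducedPerm_eq_iff ..).2 (glue_rightEmb m _ _)

lemma card_av312_succ (n : ℕ) :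
    Nat.card (Av312 (n + 1)) = ∑ m : Fin (n + 1), Nat.card (Av312 m) * Nat.card (Av312 (n - m)) := by
  rw [← Nat.card_congr (Equiv.sigmaFiberEquiv fun π : Av312 (n + 1) => π.1.symm 0), Nat.card_sigma]
  refine sum_congr rfl fun m _ => ?_
  rw [← Nat.card_prod, ← Nat.card_congr (av312FiberEquiv m)]
  exact Nat.card_congr (Equiv.subtypeEquivRight fun π => by rw [symm_apply_eq, eq_comm])

lemma card_av312_zero : Nat.card (Av312 0) = 1 := by
  rw [Nat.card_eq_one_iff_exists]
  exact ⟨⟨1, fun i => i.elim0⟩, fun π => Subtype.ext (Subsingleton.elim _ _)⟩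

lemma card_av312 (n : ℕ) : Nat.card (Av312 n) = catalan n := by
  induction n using Nat.strong_induction_on with
  | _ n ih =>
    cases n with
    | zero => rw [card_av312_zero, catalan_zero]
    | succ n =>
      rw [card_av312_succ, catalan_succ]
      exact sum_congr rfl fun i _ => by rw [ih i (by omega), ih (n - i) (by omega)]

/-- The generating function of `Av(312)` satisfies `x f(x)^2 − f(x) + 1 = 0`,
i.e., `f(x) = (1 − √(1−4x))/(2x)`. -/
theorem stmt5 : PowerSeries.X * f312 ^ 2 - f312 + 1 = 0 := by
  have hf : f312 = PowerSeries.map (Nat.castRingHom ℚ) PowerSeries.catalanSeries := by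
    ext n
    simp [f312, card_av312]
  have := congrArg (PowerSeries.map (Nat.castRingHom ℚ)) PowerSeries.catalanSeries_sq_mul_X_add_one
  rw [map_add, map_mul, map_pow, PowerSeries.map_X, map_one, ← hf] at this
  linear_combination this
end

section
/- A permutation lies in Av(123,132,213) if and only if it is a skew sum of copies of the permutations 1 and 12; hence |Av_n(123,132,213)| = F_n, the n-th Fibonacci number (F_0 = F_1 = 1). -/
/-- `π` avoids 123. -/
def Avoids123 {n : ℕ} (π : Equiv.Perm (Fin n)) : Prop :=
  ∀ i j k : Fin n, i < j → j < k → ¬ (π i < π j ∧ π j < π k)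

/-- `π` avoids 132. -/
def Avoids132 {n : ℕ} (π : Equiv.Perm (Fin n)) : Prop :=
  ∀ i j k : Fin n, i < j → j < k → ¬ (π i < π k ∧ π k < π j)

/-- `π` avoids 213. -/
def Avoids213 {n : ℕ} (π : Equiv.Perm (Fin n)) : Prop :=
  ∀ i j k : Fin n, i < j → j < k → ¬ (π j < π i ∧ π i < π k)

/-- `π` is a direct sum of copies of `1` and `21`: an involution moving
every point by at most one. -/
def IsDirectSumOf1And21 {n : ℕ} (π : Equiv.Perm (Fin n)) : Prop :=
  ∀ i : Fin n, π (π i) = i ∧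
    ((π i : ℕ) = (i : ℕ) ∨ (π i : ℕ) = (i : ℕ) + 1 ∨ (π i : ℕ) + 1 = (i : ℕ))

/-- `π` is a skew sum of copies of `1` and `12`: equivalently, its complement
(obtained by reversing all values) is a direct sum of copies of `1` and `21`. -/
def IsSkewSumOf1And12 {n : ℕ} (π : Equiv.Perm (Fin n)) : Prop :=
  IsDirectSumOf1And21 (π.trans Fin.revPerm)

/-!
In a triple `i < j < k` the patterns left after forbidding 123, 132 and 213 are 231, 312 and
321, so `π` avoids them exactly when `π k < π i` for all `i + 2 ≤ k`. For the complement
`τ = rev ∘ π` this says `τ i < τ k` whenever `i + 2 ≤ k`, and by pigeonhole this holds exactly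
when `τ` moves every point by at most one; such a permutation is forced to be an involution,
i.e. a direct sum of copies of `1` and `21`. Such a sum on `n + 2` points begins with `1` or
with `21`, which gives the Fibonacci recursion.
-/

open Equiv Finset

theorem Function.Injective.exists_ge_and_apply_le {α : Type*} [LinearOrder α]
    [LocallyFiniteOrderTop α] {f : α → α} (hf : Function.Injective f) (b : α) :
    ∃ k, b ≤ k ∧ f k ≤ b := by
  by_contra! h
  have hle : #(Ici b) ≤ #(Ioi b) :=
    card_le_card_of_injOn f (fun k hk => by simpa using h k (by simpa using hk)) hf.injOn
  have := card_Ioi_eq_card_Ici_sub_one b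
  have := (nonempty_Ici (a := b)).card_pos
  omega

theorem Function.Injective.exists_le_and_le_apply {α : Type*} [LinearOrder α]
    [LocallyFiniteOrderBot α] {f : α → α} (hf : Function.Injective f) (b : α) :
    ∃ k, k ≤ b ∧ b ≤ f k :=
  Function.Injective.exists_ge_and_apply_le (α := αᵒᵈ) hf b

section
variable {n : ℕ}

def GapTwoIncreasing (τ : Perm (Fin n)) : Prop :=
  ∀ i k : Fin n, (i : ℕ) + 2 ≤ k → τ i < τ k

theorem GapTwoIncreasing.apply_le {τ : Perm (Fin n)} (h : GapTwoIncreasing τ) (i : Fin n) :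
    (τ i : ℕ) ≤ i + 1 := by
  by_contra! hi
  obtain ⟨k, hk, hτk⟩ := τ.injective.exists_ge_and_apply_le (τ i)
  exact (h i k (by omega)).not_ge hτk

theorem GapTwoIncreasing.le_apply {τ : Perm (Fin n)} (h : GapTwoIncreasing τ) (i : Fin n) :
    (i : ℕ) ≤ τ i + 1 := by
  by_contra! hi
  obtain ⟨k, hk, hτk⟩ := τ.injective.exists_le_and_le_apply (τ i)
  exact (h k i (by omega)).not_ge hτk

theorem apply_apply_eq_self_of_apply_eq_succ {τ : Perm (Fin n)}
    (h : ∀ j, (τ j : ℕ) ≤ j + 1 ∧ (j : ℕ) ≤ τ j + 1) {i : Fin n} (hi : (τ i : ℕ) = i + 1) :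
    τ (τ i) = i := by
  induction i using WellFoundedLT.induction with
  | ind i ih =>
    obtain ⟨j, rfl⟩ := τ.surjective i
    obtain hj | hj | hj : (j : ℕ) = τ j + 1 ∨ j = τ j ∨ (j : ℕ) + 1 = τ j := by
      have := h j; omega
    · rw [show τ (τ j) = j from Fin.ext (by omega)]
    · rw [← hj] at hi; omega
    · -- the preimage `j` of `τ j` lies just below it, so by induction `τ (τ j) = j`
      have := ih j (by omega) hj.symm
      rw [this] at hi; omega

theorem isDirectSumOf1And21_iff {τ : Perm (Fin n)} :
    IsDirectSumOf1And21 τ ↔ ∀ i, (τ i : ℕ) ≤ i + 1 ∧ (i : ℕ) ≤ τ i + 1 := by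
  refine ⟨fun h i => by have := (h i).2; omega, fun h i => ⟨?_, by have := h i; omega⟩⟩
  obtain hi | hi | hi : τ i = i ∨ (τ i : ℕ) = i + 1 ∨ (i : ℕ) = τ i + 1 := by
    rw [Fin.ext_iff]; have := h i; omega
  · rw [hi, hi]
  · exact apply_apply_eq_self_of_apply_eq_succ h hi
  · have hsymm : ∀ j, (τ.symm j : ℕ) ≤ j + 1 ∧ (j : ℕ) ≤ τ.symm j + 1 := fun j => by
      have := h (τ.symm j); rw [apply_symm_apply] at this; omega
    have := apply_apply_eq_self_of_apply_eq_succ hsymm (i := τ i) (by simpa using hi)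
    rw [symm_apply_apply, symm_apply_eq] at this
    exact this.symm

theorem gapTwoIncreasing_iff {τ : Perm (Fin n)} :
    GapTwoIncreasing τ ↔ ∀ i, (τ i : ℕ) ≤ i + 1 ∧ (i : ℕ) ≤ τ i + 1 := by
  refine ⟨fun h i => ⟨h.apply_le i, h.le_apply i⟩, fun h i k hik => ?_⟩
  have hne : τ i ≠ τ k := τ.injective.ne (by rintro rfl; omega)
  rw [Ne, Fin.ext_iff] at hne
  rw [Fin.lt_def]
  have := h i; have := h k; omega

theorem avoids_iff_forall_lt (π : Perm (Fin n)) :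
    (Avoids123 π ∧ Avoids132 π ∧ Avoids213 π) ↔ ∀ i j k, i < j → j < k → π k < π i := by
  refine ⟨fun ⟨h123, h132, h213⟩ i j k hij hjk => ?_, fun h => ⟨?_, ?_, ?_⟩⟩
  · have hij' := π.injective.ne hij.ne
    have hjk' := π.injective.ne hjk.ne
    have hik' := π.injective.ne (hij.trans hjk).ne
    have := h123 i j k hij hjk
    have := h132 i j k hij hjk
    have := h213 i j k hij hjk
    grind
  all_goals
    intro i j k hij hjk
    have := h i j k hij hjk
    grind

theorem forall_lt_iff_gapTwoIncreasing (π : Perm (Fin n)) :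
    (∀ i j k, i < j → j < k → π k < π i) ↔ GapTwoIncreasing (π.trans Fin.revPerm) := by
  simp only [GapTwoIncreasing, trans_apply, Fin.revPerm_apply, Fin.rev_lt_rev]
  refine ⟨fun h i k hik => h i ⟨i + 1, by omega⟩ k (by simp [Fin.lt_def])
    (by simp [Fin.lt_def]; omega), fun h i j k hij hjk => h i k (by omega)⟩

theorem avoids_iff_isSkewSumOf1And12 (π : Perm (Fin n)) :
    (Avoids123 π ∧ Avoids132 π ∧ Avoids213 π) ↔ IsSkewSumOf1And12 π := by
  rw [avoids_iff_forall_lt, forall_lt_iff_gapTwoIncreasing, IsSkewSumOf1And12,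
    isDirectSumOf1And21_iff, gapTwoIncreasing_iff]

def prependOne (σ : Perm (Fin n)) : Perm (Fin (n + 1)) :=
  Perm.decomposeFin.symm (0, σ)

def prependTwoOne (σ : Perm (Fin n)) : Perm (Fin (n + 2)) :=
  Perm.decomposeFin.symm (1, prependOne σ)

@[simp] theorem prependOne_zero (σ : Perm (Fin n)) : prependOne σ 0 = 0 :=
  Perm.decomposeFin_symm_apply_zero _ _

@[simp] theorem prependOne_succ (σ : Perm (Fin n)) (i : Fin n) :
    prependOne σ i.succ = (σ i).succ := by
  simp [prependOne, Perm.decomposeFin_symm_apply_succ]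

@[simp] theorem prependTwoOne_zero (σ : Perm (Fin n)) : prependTwoOne σ 0 = 1 :=
  Perm.decomposeFin_symm_apply_zero _ _

@[simp] theorem prependTwoOne_one (σ : Perm (Fin n)) : prependTwoOne σ 1 = 0 := by
  simp [prependTwoOne, Perm.decomposeFin_symm_apply_one]

@[simp] theorem prependTwoOne_succ_succ (σ : Perm (Fin n)) (i : Fin n) :
    prependTwoOne σ i.succ.succ = (σ i).succ.succ := by
  simp [prependTwoOne, Perm.decomposeFin_symm_apply_succ, swap_apply_of_ne_of_ne,
    Fin.ext_iff]

theorem prependOne_injective : Function.Injective (prependOne (n := n)) :=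
  fun _ _ h => congrArg Prod.snd (Perm.decomposeFin.symm.injective h)

theorem prependTwoOne_injective : Function.Injective (prependTwoOne (n := n)) :=
  fun _ _ h => prependOne_injective (congrArg Prod.snd (Perm.decomposeFin.symm.injective h))

theorem exists_prependOne_eq {τ : Perm (Fin (n + 1))} (h : τ 0 = 0) : ∃ σ, prependOne σ = τ := by
  obtain ⟨⟨p, σ⟩, rfl⟩ := Perm.decomposeFin.symm.surjective τ
  rw [Perm.decomposeFin_symm_apply_zero] at h
  exact ⟨σ, by rw [prependOne, h]⟩

theorem exists_prependTwoOne_eq {τ : Perm (Fin (n + 2))} (h₀ : τ 0 = 1) (h₁ : τ 1 = 0) :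
    ∃ σ, prependTwoOne σ = τ := by
  obtain ⟨⟨p, e⟩, rfl⟩ := Perm.decomposeFin.symm.surjective τ
  rw [Perm.decomposeFin_symm_apply_zero] at h₀
  subst h₀
  rw [Perm.decomposeFin_symm_apply_one, swap_apply_eq_iff, swap_apply_left,
    ← Fin.succ_zero_eq_one, Fin.succ_inj] at h₁
  obtain ⟨σ, rfl⟩ := exists_prependOne_eq h₁
  exact ⟨σ, rfl⟩

theorem isDirectSumOf1And21_one : IsDirectSumOf1And21 (1 : Perm (Fin n)) :=
  fun _ => ⟨rfl, Or.inl rfl⟩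

theorem isDirectSumOf1And21_prependOne_iff {σ : Perm (Fin n)} :
    IsDirectSumOf1And21 (prependOne σ) ↔ IsDirectSumOf1And21 σ := by
  simp [isDirectSumOf1And21_iff, Fin.forall_fin_succ]

theorem isDirectSumOf1And21_prependTwoOne_iff {σ : Perm (Fin n)} :
    IsDirectSumOf1And21 (prependTwoOne σ) ↔ IsDirectSumOf1And21 σ := by
  simp [isDirectSumOf1And21_iff, Fin.forall_fin_succ]

end

theorem card_isDirectSumOf1And21_add_two (n : ℕ) :
    Nat.card {τ : Perm (Fin (n + 2)) // IsDirectSumOf1And21 τ} =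
      Nat.card {τ : Perm (Fin (n + 1)) // IsDirectSumOf1And21 τ} +
        Nat.card {τ : Perm (Fin n) // IsDirectSumOf1And21 τ} := by
  let f : {σ : Perm (Fin (n + 1)) // IsDirectSumOf1And21 σ} ⊕
      {σ : Perm (Fin n) // IsDirectSumOf1And21 σ} →
      {τ : Perm (Fin (n + 2)) // IsDirectSumOf1And21 τ} :=
    Sum.elim (fun σ => ⟨prependOne σ, isDirectSumOf1And21_prependOne_iff.2 σ.2⟩)
      (fun σ => ⟨prependTwoOne σ, isDirectSumOf1And21_prependTwoOne_iff.2 σ.2⟩)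
  rw [← Nat.card_sum]
  refine (Nat.card_eq_of_bijective f ⟨?_, ?_⟩).symm
  · rintro (σ | σ) (σ' | σ') h <;> simp only [f, Sum.elim_inl, Sum.elim_inr, Subtype.mk.injEq] at h
    · rw [Subtype.ext (prependOne_injective h)]
    · simpa using congrArg (· 0) h
    · simpa using congrArg (· 0) h
    · rw [Subtype.ext (prependTwoOne_injective h)]
  · rintro ⟨τ, hτ⟩
    obtain ⟨hτ₀, h₀ | h₀ | h₀⟩ := hτ 0
    · obtain ⟨σ, rfl⟩ := exists_prependOne_eq (Fin.ext h₀)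
      exact ⟨.inl ⟨σ, isDirectSumOf1And21_prependOne_iff.1 hτ⟩, rfl⟩
    · have h₀ : τ 0 = 1 := Fin.ext h₀
      obtain ⟨σ, rfl⟩ := exists_prependTwoOne_eq h₀ (h₀ ▸ hτ₀)
      exact ⟨.inr ⟨σ, isDirectSumOf1And21_prependTwoOne_iff.1 hτ⟩, rfl⟩
    · simp at h₀

theorem card_isDirectSumOf1And21 (n : ℕ) :
    Nat.card {τ : Perm (Fin n) // IsDirectSumOf1And21 τ} = Nat.fib (n + 1) := by
  induction n using Nat.twoStepInduction with
  | zero | one =>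
    exact Nat.card_eq_one_iff_unique.2 ⟨inferInstance, ⟨⟨1, isDirectSumOf1And21_one⟩⟩⟩
  | more n ih₀ ih₁ =>
    rw [card_isDirectSumOf1And21_add_two, ih₀, ih₁, add_comm]
    exact (Nat.fib_add_two (n := n + 1)).symm

theorem card_avoids123_132_213 (n : ℕ) :
    Nat.card {π : Perm (Fin n) // Avoids123 π ∧ Avoids132 π ∧ Avoids213 π} = Nat.fib (n + 1) := by
  rw [← card_isDirectSumOf1And21,
    Nat.card_congr (Equiv.subtypeEquiv (Equiv.mulLeft Fin.revPerm) avoids_iff_isSkewSumOf1And12)]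

/-- `π ∈ Av(123,132,213)` iff `π` is a skew sum of copies of `1` and `12`;
hence `|Av_n(123,132,213)| = F_n` (Fibonacci with `F_0 = F_1 = 1`). -/
theorem stmt10 :
    (∀ (n : ℕ) (π : Equiv.Perm (Fin n)),
      (Avoids123 π ∧ Avoids132 π ∧ Avoids213 π) ↔ IsSkewSumOf1And12 π) ∧
    (∀ n : ℕ,
      Nat.card {π : Equiv.Perm (Fin n) // Avoids123 π ∧ Avoids132 π ∧ Avoids213 π}
        = Nat.fib (n + 1)) :=
  ⟨fun _ => avoids_iff_isSkewSumOf1And12, card_avoids123_132_213⟩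
end
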